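/- In the setting of the distance-decrease lemma, for any x ∈ ℝⁿ, the stochastic subgradients satisfy E_ξ[ Σ_{j=1}^M g_j(k)ᵀ(w̄(k) − x) ] ≥ −2H·||ΔW(k)||_F + E_ξ[ F(w̄(k)) − F(x) ], where g_j(k) is the stochastic subgradient at w_j(k), provided that both the matrix of expected stochastic subgradients at the points w_j(k) and the matrix of expected stochastic subgradients at w̄(k) have Frobenius norm at most H. -/

import Mathlib

open MeasureTheory Matrix Finset

noncomputable section

/-- Squared Frobenius norm of a real matrix. -/
def frobSq {n M : ℕ} (B : Matrix (Fin n) (Fin M) ℝ) : ℝ := ∑ i, ∑ j, B i j ^ 2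

/-- Frobenius norm of a real matrix. -/
def frobNorm {n M : ℕ} (B : Matrix (Fin n) (Fin M) ℝ) : ℝ := Real.sqrt (frobSq B)

/-- Squared Frobenius norm of a complex matrix. -/
def frobSqC {n M : ℕ} (B : Matrix (Fin n) (Fin M) ℂ) : ℝ := ∑ i, ∑ j, ‖B i j‖ ^ 2

/-- The `j`-th column of a matrix, viewed as a vector of `EuclideanSpace ℝ (Fin n)`. -/
def col {n M : ℕ} (B : Matrix (Fin n) (Fin M) ℝ) (j : Fin M) : EuclideanSpace ℝ (Fin n) :=
  WithLp.toLp 2 (fun i => B i j)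

/-- `ΔB := B (I - 𝟙𝟙ᵀ/M)`: subtract from every column the average of all columns. -/
def ctr {n M : ℕ} (B : Matrix (Fin n) (Fin M) ℝ) : Matrix (Fin n) (Fin M) ℝ :=
  Matrix.of fun i j => B i j - (∑ j', B i j') / M

/-- The average of the columns of `B` (the average model `w̄`). -/
def colAvg {n M : ℕ} (B : Matrix (Fin n) (Fin M) ℝ) : EuclideanSpace ℝ (Fin n) :=
  WithLp.toLp 2 (fun i => (∑ j, B i j) / M)

/-- Time average of a sequence of vectors over iterations `0, …, K-1`. -/
def timeAvg {n : ℕ} (K : ℕ) (v : ℕ → EuclideanSpace ℝ (Fin n)) : EuclideanSpace ℝ (Fin n) :=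
  WithLp.toLp 2 (fun i => (∑ k ∈ Finset.range K, v k i) / K)

/-- `g` is a subgradient of `f` at `x`. -/
def IsSubgradAt {n : ℕ} (f : EuclideanSpace ℝ (Fin n) → ℝ)
    (g x : EuclideanSpace ℝ (Fin n)) : Prop :=
  ∀ y, f x + (inner ℝ g (y - x) : ℝ) ≤ f y

/-
Write `w̄` for the average model and `gⱼ`, `g̃ⱼ` for the expected subgradients at `wⱼ` and at `w̄`.
The subgradient inequalities at `wⱼ` and at `w̄` give
`Fⱼ(w̄) - Fⱼ(x) ≤ ⟨gⱼ, w̄ - x⟩ + ⟨gⱼ - g̃ⱼ, wⱼ - w̄⟩`.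
Summed over `j`, the correction term pairs `EG - EGt` with the matrix `ΔW` of columns `wⱼ - w̄`,
so Cauchy–Schwarz for the Frobenius pairing bounds it by `2H ‖ΔW‖_F`. Finally, the expectation of
`Σⱼ ⟨gⱼ(k), w̄ - x⟩` is `Σⱼ ⟨gⱼ, w̄ - x⟩` by linearity of the integral.
-/

lemma frobNorm_neg {n M : ℕ} (B : Matrix (Fin n) (Fin M) ℝ) : frobNorm (-B) = frobNorm B := by
  simp only [frobNorm, frobSq, Matrix.neg_apply, neg_sq]

lemma sum_sum_mul_le_frobNorm_mul_frobNorm {n M : ℕ} (A B : Matrix (Fin n) (Fin M) ℝ) :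
    ∑ j, ∑ i, A i j * B i j ≤ frobNorm A * frobNorm B := by
  have flatten : ∀ f : Fin n → Fin M → ℝ, ∑ i, ∑ j, f i j = ∑ p : Fin n × Fin M, f p.1 p.2 :=
    fun f => (Fintype.sum_prod_type' f).symm
  rw [Finset.sum_comm, frobNorm, frobNorm, frobSq, frobSq, flatten, flatten, flatten]
  exact Real.sum_mul_le_sqrt_mul_sqrt _ _ _

lemma inner_col {n M : ℕ} (A : Matrix (Fin n) (Fin M) ℝ) (j : Fin M)
    (v : EuclideanSpace ℝ (Fin n)) : inner ℝ (_root_.col A j) v = ∑ i, A i j * v i := by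
  simp only [PiLp.inner_apply, RCLike.inner_apply, conj_trivial, _root_.col, mul_comm]

lemma col_ctr {n M : ℕ} (W : Matrix (Fin n) (Fin M) ℝ) (j : Fin M) :
    _root_.col (ctr W) j = _root_.col W j - colAvg W :=
  rfl

lemma IsSubgradAt.sub_le_inner {n : ℕ} {f : EuclideanSpace ℝ (Fin n) → ℝ}
    {g x : EuclideanSpace ℝ (Fin n)} (h : IsSubgradAt f g x) (y : EuclideanSpace ℝ (Fin n)) :
    f x - f y ≤ inner ℝ g (x - y) := by
  have := h y
  rw [← neg_sub y x, inner_neg_right]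
  linarith

lemma sub_le_inner_add_inner_sub {n : ℕ} {f : EuclideanSpace ℝ (Fin n) → ℝ}
    {g g' w w' : EuclideanSpace ℝ (Fin n)} (hg : IsSubgradAt f g w) (hg' : IsSubgradAt f g' w')
    (x : EuclideanSpace ℝ (Fin n)) :
    f w' - f x ≤ inner ℝ g (w' - x) + inner ℝ (g - g') (w - w') := by
  have hw := hg.sub_le_inner x
  have hw' := hg'.sub_le_inner w
  rw [show w - x = (w' - x) + (w - w') by abel, inner_add_right] at hw
  rw [← neg_sub w w', inner_neg_right] at hw'
  rw [inner_sub_left]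
  linarith

lemma sum_sub_le_sum_inner_add_frobNorm_ctr {n M : ℕ}
    (Fj : Fin M → EuclideanSpace ℝ (Fin n) → ℝ) (W EG EGt : Matrix (Fin n) (Fin M) ℝ)
    (hsub : ∀ j, IsSubgradAt (Fj j) (_root_.col EG j) (_root_.col W j))
    (hsubt : ∀ j, IsSubgradAt (Fj j) (_root_.col EGt j) (colAvg W))
    {H : ℝ} (hH : frobNorm EG ≤ H) (hHt : frobNorm EGt ≤ H) (x : EuclideanSpace ℝ (Fin n)) :
    ∑ j, (Fj j (colAvg W) - Fj j x) ≤
      ∑ j, inner ℝ (_root_.col EG j) (colAvg W - x) + 2 * H * frobNorm (ctr W) := by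
  have hpair : ∀ A : Matrix (Fin n) (Fin M) ℝ,
      ∑ j, inner ℝ (_root_.col A j) (_root_.col W j - colAvg W) = ∑ j, ∑ i, A i j * ctr W i j := by
    intro A
    simp only [← col_ctr, inner_col]
    rfl
  have hctr : 0 ≤ frobNorm (ctr W) := Real.sqrt_nonneg _
  have hEG : ∑ j, ∑ i, EG i j * ctr W i j ≤ H * frobNorm (ctr W) :=
    (sum_sum_mul_le_frobNorm_mul_frobNorm EG (ctr W)).trans (mul_le_mul_of_nonneg_right hH hctr)
  have hEGt : -(H * frobNorm (ctr W)) ≤ ∑ j, ∑ i, EGt i j * ctr W i j := by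
    have := (sum_sum_mul_le_frobNorm_mul_frobNorm (-EGt) (ctr W)).trans
      (mul_le_mul_of_nonneg_right ((frobNorm_neg EGt).trans_le hHt) hctr)
    simp only [Matrix.neg_apply, neg_mul, Finset.sum_neg_distrib] at this
    linarith
  calc ∑ j, (Fj j (colAvg W) - Fj j x)
      ≤ ∑ j, (inner ℝ (_root_.col EG j) (colAvg W - x)
          + inner ℝ (_root_.col EG j - _root_.col EGt j) (_root_.col W j - colAvg W)) :=
        Finset.sum_le_sum fun j _ => sub_le_inner_add_inner_sub (hsub j) (hsubt j) x
    _ = ∑ j, inner ℝ (_root_.col EG j) (colAvg W - x)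
          + (∑ j, ∑ i, EG i j * ctr W i j - ∑ j, ∑ i, EGt i j * ctr W i j) := by
        simp only [inner_sub_left, Finset.sum_add_distrib, Finset.sum_sub_distrib, hpair]
    _ ≤ _ := by linarith

lemma integral_sum_sum_mul_const {ι κ Ω : Type*} [Fintype ι] [Fintype κ] [MeasurableSpace Ω]
    {μ : Measure Ω} (G : Ω → ι → κ → ℝ) (hG : ∀ i j, Integrable (fun ω => G ω i j) μ)
    (v : ι → ℝ) :
    ∫ ω, ∑ j, ∑ i, G ω i j * v i ∂μ = ∑ j, ∑ i, (∫ ω, G ω i j ∂μ) * v i := by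
  rw [integral_finsetSum _ fun j _ => integrable_finsetSum _ fun i _ => (hG i j).mul_const _]
  refine Finset.sum_congr rfl fun j _ => ?_
  rw [integral_finsetSum _ fun i _ => (hG i j).mul_const _]
  simp only [integral_mul_const]

theorem statement12_general
    (n M : ℕ)
    -- the local objective functions and the global objective `F`
    (Fj : Fin M → EuclideanSpace ℝ (Fin n) → ℝ)
    (F : EuclideanSpace ℝ (Fin n) → ℝ) (hFdef : F = fun w => ∑ j, Fj j w)
    -- probability space carrying the minibatch randomness of the current iteration
    {Ω : Type*} [m0 : MeasurableSpace Ω] (μ : Measure Ω) [IsProbabilityMeasure μ]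
    -- current estimates `W = W(k)`, the random stochastic subgradient matrix `G = G(k)`,
    (W : Matrix (Fin n) (Fin M) ℝ)
    (G : Ω → Matrix (Fin n) (Fin M) ℝ)
    (hGint : ∀ i j, Integrable (fun ω => G ω i j) μ)
    -- the expected stochastic subgradient matrices
    (EG EGt : Matrix (Fin n) (Fin M) ℝ)
    (hEG : ∀ i j, EG i j = ∫ ω, G ω i j ∂μ)
    -- unbiasedness: the expected columns are subgradients at `wⱼ(k)` resp. at `w̄(k)`
    (hsub : ∀ j, IsSubgradAt (Fj j) (col EG j) (col W j))
    (hsubt : ∀ j, IsSubgradAt (Fj j) (col EGt j) (colAvg W))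
    -- both expected stochastic subgradient matrices have Frobenius norm at most `H`
    (H : ℝ) (hH : frobNorm EG ≤ H) (hHt : frobNorm EGt ≤ H)
    (x : EuclideanSpace ℝ (Fin n)) :
    -2 * H * frobNorm (ctr W) + (∫ _ω, (F (colAvg W) - F x) ∂μ) ≤
      ∫ ω, ∑ j, ∑ i, G ω i j * (colAvg W i - x i) ∂μ := by
  have hkey := sum_sub_le_sum_inner_add_frobNorm_ctr Fj W EG EGt hsub hsubt hH hHt x
  have hexp : ∫ ω, ∑ j, ∑ i, G ω i j * (colAvg W i - x i) ∂μ =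
      ∑ j, inner ℝ (_root_.col EG j) (colAvg W - x) := by
    rw [integral_sum_sum_mul_const G hGint]
    simp only [inner_col, hEG, PiLp.sub_apply]
  rw [hexp, integral_const, probReal_univ, one_smul, hFdef, ← Finset.sum_sub_distrib]
  linarith

/-- **Key inequality in the distance-decrease lemma.** For any `x ∈ ℝⁿ`, the stochastic
subgradients satisfy
`E_ξ[ Σⱼ gⱼ(k)ᵀ (w̄(k) - x) ] ≥ -2H ‖ΔW(k)‖_F + E_ξ[F(w̄(k)) - F(x)]`. -/
theorem statement12
    (n M : ℕ) (hM : 0 < M)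
    -- the local objective functions and the global objective `F`
    (Fj : Fin M → EuclideanSpace ℝ (Fin n) → ℝ)
    (hconv : ∀ j, ConvexOn ℝ Set.univ (Fj j))
    (F : EuclideanSpace ℝ (Fin n) → ℝ) (hFdef : F = fun w => ∑ j, Fj j w)
    -- probability space carrying the minibatch randomness of the current iteration
    {Ω : Type*} [m0 : MeasurableSpace Ω] (μ : Measure Ω) [IsProbabilityMeasure μ]
    -- current estimates `W = W(k)`, the random stochastic subgradient matrix `G = G(k)`,
    -- and a random stochastic subgradient matrix `Gt` taken at the average model `w̄(k)`
    (W : Matrix (Fin n) (Fin M) ℝ)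
    (G Gt : Ω → Matrix (Fin n) (Fin M) ℝ)
    (hGint : ∀ i j, Integrable (fun ω => G ω i j) μ)
    (hGtint : ∀ i j, Integrable (fun ω => Gt ω i j) μ)
    -- the expected stochastic subgradient matrices
    (EG EGt : Matrix (Fin n) (Fin M) ℝ)
    (hEG : ∀ i j, EG i j = ∫ ω, G ω i j ∂μ)
    (hEGt : ∀ i j, EGt i j = ∫ ω, Gt ω i j ∂μ)
    -- unbiasedness: the expected columns are subgradients at `wⱼ(k)` resp. at `w̄(k)`
    (hsub : ∀ j, IsSubgradAt (Fj j) (col EG j) (col W j))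
    (hsubt : ∀ j, IsSubgradAt (Fj j) (col EGt j) (colAvg W))
    -- both expected stochastic subgradient matrices have Frobenius norm at most `H`
    (H : ℝ) (hH : frobNorm EG ≤ H) (hHt : frobNorm EGt ≤ H)
    (x : EuclideanSpace ℝ (Fin n)) :
    -2 * H * frobNorm (ctr W) + (∫ _ω, (F (colAvg W) - F x) ∂μ) ≤
      ∫ ω, ∑ j, ∑ i, G ω i j * (colAvg W i - x i) ∂μ :=
  statement12_general n M Fj F hFdef (m0 := m0) μ W G hGint EG EGt hEG hsub hsubt H hH hHt x

end
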